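/- Let m, n ≥ 0. Then Q^{(1^n)}·P^{(1^m)} = Σ_{k=0}^{min(m,n)} [k+1]·P^{(1^{m−k})}·Q^{(1^{n−k})} in A. In other words, the commutation relations among the elements P^{(1^n)}, Q^{(1^n)} are the same as those among the P^{(n)}, Q^{(n)} (as asserted for the involution ψ of the quantum Heisenberg algebra). -/

import Mathlib

/-!
Both `P^{(1^n)}` and `Q^{(1^n)}` satisfy Newton's recursion with coefficients
`c r = (-1)^{r+1} r/[r]`. Because `[a_r, b_m]` is a scalar, induction on the recursion for `P`
gives `[a_r, P^{(1^n)}] = κ_r P^{(1^{n-r})}` with `κ_r = c_r [2r][r]/r²`; a second induction, on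
the recursion for `Q`, moves `Q^{(1^n)}` past `P^{(1^m)}` and produces coefficients `f_k` with
`k f_k = ∑_{r=1}^k c_r κ_r f_{k-r}`, i.e. `∑ f_k x^k = exp (∑ c_r κ_r x^r / r)`.
Since `c_r κ_r = q^r + q^{-r}`, this is `1/((1 - qx)(1 - q⁻¹x))`, so `f_k = [k+1]`; the recursion
for `[k+1]` is the identity `∑_{r=1}^k (q^r + q^{-r}) [k-r+1] = k [k+1]`.
-/

/-- The quantum integer `[n] = (q^n - q^{-n})/(q - q^{-1})` in `K = ℚ(q)`,
where `q` is the variable `RatFunc.X`. -/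
noncomputable def qint (n : ℤ) : RatFunc ℚ :=
  (RatFunc.X ^ n - RatFunc.X ^ (-n)) / (RatFunc.X - RatFunc.X⁻¹)

open Finset

theorem sum_Icc_sum_range_eq_sum_range_sum_Icc {M : Type*} [AddCommMonoid M] {N : ℕ}
    (G : ℕ → ℕ → M) (hG : ∀ r k, N < r + k → G r k = 0) :
    ∑ r ∈ Icc 1 N, ∑ k ∈ range (N + 1), G r k =
      ∑ j ∈ range (N + 1), ∑ r ∈ Icc 1 j, G r (j - r) := by
  calc ∑ r ∈ Icc 1 N, ∑ k ∈ range (N + 1), G r k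
      = ∑ r ∈ Icc 1 N, ∑ k ∈ range (N + 1 - r), G r k := by
        refine sum_congr rfl fun r _ => (sum_subset (range_subset_range.mpr (by omega))
          fun k _ hk => hG r k ?_).symm
        simp only [mem_range] at hk
        omega
    _ = ∑ j ∈ range (N + 1), ∑ r ∈ Icc 1 j, G r (j - r) := by
        rw [sum_sigma', sum_sigma']
        refine sum_nbij' (fun p => ⟨p.1 + p.2, p.1⟩) (fun p => ⟨p.2, p.1 - p.2⟩)
          ?_ ?_ ?_ ?_ ?_ <;>
          simp only [mem_sigma, mem_Icc, mem_range, Sigma.forall, Sigma.mk.injEq, heq_eq_eq,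
            Nat.add_sub_cancel_left, and_true, implies_true] <;> omega

section Newton

variable {K A : Type*} [Field K] [Ring A] [Algebra K A]

/-- Newton's recursion: it says that `∑ P n z^n = exp (∑ c m b m z^m / m)`. -/
structure IsNewtonSeq (c : ℕ → K) (b : ℕ → A) (P : ℤ → A) : Prop where
  zero : P 0 = 1
  neg : ∀ k < 0, P k = 0
  succ : ∀ n : ℕ, 1 ≤ n → (n : K) • P n = ∑ m ∈ Icc 1 n, c m • (b m * P (n - m))

namespace IsNewtonSeq

variable {c : ℕ → K} {b : ℕ → A} {P : ℤ → A}

theorem sum_Icc_eq (hP : IsNewtonSeq c b P) {N : ℕ} {i : ℤ} (hi : i ≤ N) :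
    ∑ m ∈ Icc 1 N, c m • (b m * P (i - m)) = (i : K) • P i := by
  obtain hi0 | hi0 := lt_or_ge 0 i
  · lift i to ℕ using hi0.le
    rw [Int.cast_natCast, hP.succ i (by omega)]
    refine (sum_subset (Icc_subset_Icc_right (by omega)) fun m hm hm' => ?_).symm
    simp only [mem_Icc] at hm hm'
    rw [hP.neg _ (by omega), mul_zero, smul_zero]
  · have hvanish : ∀ m ∈ Icc 1 N, c m • (b m * P (i - m)) = 0 := fun m hm => by
      rw [hP.neg _ (by simp only [mem_Icc] at hm; omega), mul_zero, smul_zero]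
    obtain hi0 | rfl := hi0.lt_or_eq
    · rw [sum_eq_zero hvanish, hP.neg i hi0, smul_zero]
    · rw [sum_eq_zero hvanish, Int.cast_zero, zero_smul]

theorem commutator_eq [CharZero K] (hP : IsNewtonSeq c b P) {x : A} {r : ℕ} (hr : 1 ≤ r)
    {β : K} (hx : ∀ m : ℕ, 1 ≤ m → x * b m - b m * x = if r = m then β • 1 else 0)
    (n : ℤ) :
    x * P n - P n * x = (c r * β / r) • P (n - r) := by
  set κ := c r * β / r
  induction n using Int.strongRec (m := 1) with
  | lt n hn =>
    rw [hP.neg (n - r) (by omega)]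
    obtain hn | rfl := (show n ≤ 0 by omega).lt_or_eq
    · simp [hP.neg n hn]
    · simp [hP.zero]
  | ge n hn ih =>
    lift n to ℕ using by omega
    apply smul_right_injective A (Nat.cast_ne_zero.mpr (by omega : n ≠ 0) : (n : K) ≠ 0)
    have hterm : ∀ m ∈ Icc 1 n, x * (b m * P (n - m)) - b m * P (n - m) * x =
        (x * b m - b m * x) * P (n - m) + b m * (κ • P (n - r - m)) := fun m hm => by
      rw [sub_right_comm, ← ih _ (by simp only [mem_Icc] at hm; omega)]
      noncomm_ring
    have hdelta : ∑ m ∈ Icc 1 n, c m • ((x * b m - b m * x) * P (n - m)) =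
        (c r * β) • P (n - r) := by
      rw [sum_congr rfl fun m hm => by rw [hx m (mem_Icc.mp hm).1]]
      simp only [ite_mul, zero_mul, smul_ite, smul_zero, sum_ite_eq, mem_Icc, smul_mul_assoc,
        one_mul, smul_smul]
      split_ifs with hrn
      · rfl
      · rw [hP.neg _ (by omega), smul_zero]
    calc (n : K) • (x * P n - P n * x)
        = ∑ m ∈ Icc 1 n, c m • (x * (b m * P (n - m)) - b m * P (n - m) * x) := by
          rw [smul_sub, ← mul_smul_comm, ← smul_mul_assoc, hP.succ n (by omega), mul_sum,
            sum_mul, ← sum_sub_distrib]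
          simp only [mul_smul_comm, smul_mul_assoc, smul_sub]
      _ = (c r * β) • P (n - r) + κ • ((((n : ℤ) - r : ℤ) : K) • P (n - r)) := by
          rw [sum_congr rfl fun m hm => by rw [hterm m hm], ← hdelta,
            ← hP.sum_Icc_eq (N := n) (i := n - r) (by omega), smul_sum, ← sum_add_distrib]
          simp only [smul_add, mul_smul_comm, smul_comm κ]
      _ = (n : K) • κ • P (n - r) := by
          rw [smul_smul, smul_smul, ← add_smul]
          congr 1
          have : (r : K) ≠ 0 := Nat.cast_ne_zero.mpr (by omega)
          push_cast
          simp only [κ]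
          field_simp
          ring

theorem mul_eq_sum [CharZero K] {c : ℕ → K} {a : ℕ → A} {Q : ℤ → A}
    (hQ : IsNewtonSeq c a Q) {P : ℤ → A} {κ : ℕ → K}
    (hPa : ∀ r : ℕ, 1 ≤ r → ∀ m : ℤ, a r * P m - P m * a r = κ r • P (m - r))
    {f : ℕ → K} (hf0 : f 0 = 1)
    (hf : ∀ j : ℕ, 1 ≤ j → (j : K) * f j = ∑ r ∈ Icc 1 j, c r * κ r * f (j - r))
    (m : ℤ) {N : ℕ} {n : ℤ} (hn : n ≤ N) :
    Q n * P m = ∑ k ∈ range (N + 1), f k • (P (m - k) * Q (n - k)) := by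
  induction n using Int.strongRec (m := 1) with
  | lt n hn1 =>
    obtain hn0 | rfl := (show n ≤ 0 by omega).lt_or_eq
    · rw [hQ.neg n hn0, zero_mul,
        sum_eq_zero fun k _ => by rw [hQ.neg _ (by omega), mul_zero, smul_zero]]
    · rw [sum_eq_single 0 (fun k _ hk => by rw [hQ.neg _ (by omega), mul_zero, smul_zero])
        (fun h => (h (mem_range.mpr N.succ_pos)).elim)]
      simp [hQ.zero, hf0]
  | ge n hn1 ih =>
    lift n to ℕ using by omega
    apply smul_right_injective A (Nat.cast_ne_zero.mpr (by omega : n ≠ 0) : (n : K) ≠ 0)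
    set PQ : ℕ → A := fun j => P (m - j) * Q (n - j)
    have hPQ : ∀ j, n < j → PQ j = 0 := fun j hj => by
      simp only [PQ]; rw [hQ.neg _ (by omega), mul_zero]
    have hterm : ∀ r ∈ Icc 1 N, ∀ k : ℕ, a r * (P (m - k) * Q (n - r - k)) =
        P (m - k) * (a r * Q (n - k - r)) + κ r • PQ (k + r) := fun r hr k => by
      rw [← mul_assoc, sub_eq_iff_eq_add'.mp (hPa r (mem_Icc.mp hr).1 (m - k)), add_mul,
        mul_assoc, smul_mul_assoc, sub_right_comm]
      simp only [PQ]
      push_cast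
      ring_nf
    have hrec : ∀ j, ∑ r ∈ Icc 1 j, c r * κ r * f (j - r) = j * f j := fun j => by
      obtain rfl | hj := Nat.eq_zero_or_pos j
      · simp
      · exact (hf j hj).symm
    calc (n : K) • (Q n * P m)
        = ∑ r ∈ Icc 1 N, c r • (a r * (Q (n - r) * P m)) := by
          rw [← smul_mul_assoc, ← Int.cast_natCast, ← hQ.sum_Icc_eq hn, sum_mul]
          simp only [smul_mul_assoc, mul_assoc]
      _ = ∑ r ∈ Icc 1 N, ∑ k ∈ range (N + 1),
            (f k • (P (m - k) * (c r • (a r * Q (n - k - r)))) +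
              (c r * κ r * f k) • PQ (k + r)) := by
          refine sum_congr rfl fun r hr => ?_
          rw [ih (n - r) (by simp only [mem_Icc] at hr; omega) (by omega), mul_sum, smul_sum]
          refine sum_congr rfl fun k _ => ?_
          rw [mul_smul_comm, hterm r hr k]
          simp only [mul_smul_comm]
          module
      _ = ∑ k ∈ range (N + 1), f k • (P (m - k) * (((n - k : ℤ) : K) • Q (n - k))) +
            ∑ j ∈ range (N + 1), (j * f j) • PQ j := by
          rw [sum_congr rfl fun r _ => sum_add_distrib, sum_add_distrib, sum_comm,
            sum_Icc_sum_range_eq_sum_range_sum_Icc _ fun r k h => by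
              rw [hPQ _ (by omega), smul_zero]]
          congr 1
          · refine sum_congr rfl fun k _ => ?_
            rw [← hQ.sum_Icc_eq (N := N) (by omega), mul_sum, smul_sum]
          · refine sum_congr rfl fun j _ => ?_
            rw [← hrec, sum_smul]
            refine sum_congr rfl fun r hr => ?_
            rw [Nat.sub_add_cancel (mem_Icc.mp hr).2]
      _ = (n : K) • ∑ k ∈ range (N + 1), f k • (P (m - k) * Q (n - k)) := by
          rw [← sum_add_distrib, smul_sum]
          refine sum_congr rfl fun k _ => ?_
          simp only [PQ, mul_smul_comm, smul_smul, ← add_smul]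
          congr 1
          push_cast
          ring

end IsNewtonSeq

end Newton

theorem sum_Icc_zpow_add_zpow_neg_mul {F : Type*} [Field F] {x : F} (hx : x ≠ 0) (j : ℕ) :
    ∑ r ∈ Icc 1 j,
        (x ^ (r : ℤ) + x ^ (-(r : ℤ))) * (x ^ ((j : ℤ) - r + 1) - x ^ (-((j : ℤ) - r + 1)))
      = j * (x ^ ((j : ℤ) + 1) - x ^ (-((j : ℤ) + 1))) := by
  have hterm : ∀ r : ℕ,
      (x ^ (r : ℤ) + x ^ (-(r : ℤ))) * (x ^ ((j : ℤ) - r + 1) - x ^ (-((j : ℤ) - r + 1)))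
        = (x ^ ((j : ℤ) + 1) - x ^ (-((j : ℤ) + 1)))
          + (x ^ ((j : ℤ) + 1 - 2 * r) - x ^ (-((j : ℤ) + 1 - 2 * r))) := fun r => by
    simp only [add_mul, mul_sub, ← zpow_add₀ hx]
    ring_nf
  have hreflect :
      ∑ r ∈ Icc 1 j, x ^ ((j : ℤ) + 1 - 2 * r) =
        ∑ r ∈ Icc 1 j, x ^ (-((j : ℤ) + 1 - 2 * r)) := by
    refine sum_nbij' (fun r => j + 1 - r) (fun r => j + 1 - r) ?_ ?_ ?_ ?_ ?_ <;>
      intro r hr <;> simp only [mem_Icc] at hr ⊢ <;> try omega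
    congr 1
    push_cast [show r ≤ j + 1 by omega]
    ring
  have hcancel :
      ∑ r ∈ Icc 1 j, (x ^ ((j : ℤ) + 1 - 2 * r) - x ^ (-((j : ℤ) + 1 - 2 * r))) = 0 := by
    rw [sum_sub_distrib, hreflect, sub_self]
  rw [sum_congr rfl fun r _ => hterm r, sum_add_distrib, hcancel, add_zero, sum_const,
    Nat.card_Icc, Nat.add_sub_cancel, nsmul_eq_mul]

theorem X_zpow_sub_X_zpow_neg_ne_zero {n : ℕ} (hn : n ≠ 0) :
    (RatFunc.X : RatFunc ℚ) ^ (n : ℤ) - RatFunc.X ^ (-(n : ℤ)) ≠ 0 := by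
  intro h
  have h2 : (RatFunc.X : RatFunc ℚ) ^ (n + n) = 1 := by
    rw [pow_add, ← zpow_natCast]
    nth_rw 1 [sub_eq_zero.mp h]
    rw [← zpow_add₀ RatFunc.X_ne_zero, neg_add_cancel, zpow_zero]
  rw [← RatFunc.algebraMap_X, ← map_pow, ← map_one (algebraMap (Polynomial ℚ) (RatFunc ℚ)),
    (RatFunc.algebraMap_injective ℚ).eq_iff] at h2
  have := congrArg Polynomial.natDegree h2
  rw [Polynomial.natDegree_X_pow, Polynomial.natDegree_one] at this
  omega

theorem X_sub_X_inv_ne_zero : (RatFunc.X : RatFunc ℚ) - RatFunc.X⁻¹ ≠ 0 := by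
  simpa using X_zpow_sub_X_zpow_neg_ne_zero one_ne_zero

theorem qint_ne_zero {n : ℕ} (hn : n ≠ 0) : qint n ≠ 0 :=
  div_ne_zero (X_zpow_sub_X_zpow_neg_ne_zero hn) X_sub_X_inv_ne_zero

theorem qint_one : qint 1 = 1 := by
  simpa [qint] using div_self X_sub_X_inv_ne_zero

theorem qint_two_mul (n : ℤ) :
    qint (2 * n) = (RatFunc.X ^ n + RatFunc.X ^ (-n)) * qint n := by
  rw [qint, qint, mul_div_assoc']
  congr 1
  rw [two_mul, neg_add, zpow_add₀ RatFunc.X_ne_zero, zpow_add₀ RatFunc.X_ne_zero]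
  ring

theorem sum_Icc_zpow_add_zpow_neg_mul_qint (j : ℕ) :
    ∑ r ∈ Icc 1 j, (RatFunc.X ^ (r : ℤ) + RatFunc.X ^ (-(r : ℤ))) * qint ((j : ℤ) - r + 1)
      = j * qint ((j : ℤ) + 1) := by
  simp only [qint, mul_div_assoc', ← sum_div]
  rw [sum_Icc_zpow_add_zpow_neg_mul (RatFunc.X_ne_zero (K := ℚ))]

noncomputable def newtonCoeff (r : ℕ) : RatFunc ℚ :=
  (-1) ^ (r + 1) * r / qint r

theorem newtonCoeff_mul_newtonCoeff_mul {r : ℕ} (hr : r ≠ 0) :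
    newtonCoeff r *
        (newtonCoeff r * (qint (2 * r) * qint r / (r : RatFunc ℚ)) / (r : RatFunc ℚ))
      = RatFunc.X ^ (r : ℤ) + RatFunc.X ^ (-(r : ℤ)) := by
  have hr0 : (r : RatFunc ℚ) ≠ 0 := Nat.cast_ne_zero.mpr hr
  have hqr : qint r ≠ 0 := qint_ne_zero hr
  have hsign : ((-1 : RatFunc ℚ) ^ (r + 1)) ^ 2 = 1 := by
    rw [← pow_mul, mul_comm, pow_mul, neg_one_sq, one_pow]
  calc _ = ((-1 : RatFunc ℚ) ^ (r + 1)) ^ 2 *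
          (RatFunc.X ^ (r : ℤ) + RatFunc.X ^ (-(r : ℤ))) := by
        simp only [newtonCoeff, qint_two_mul]
        field_simp
    _ = _ := by rw [hsign, one_mul]

theorem heisenberg_Q1P1_same_node_general
    {A : Type*} [Ring A] [Algebra (RatFunc ℚ) A]
    (b a : ℕ → A)
    (P1 Q1 : ℤ → A)
    (hP10 : P1 0 = 1)
    (hP1neg : ∀ k : ℤ, k < 0 → P1 k = 0)
    (hP1rec : ∀ n : ℕ, 1 ≤ n →
      (n : RatFunc ℚ) • P1 n =
        ∑ m ∈ Finset.Icc 1 n,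
          ((-1 : RatFunc ℚ) ^ (m + 1) * (m : RatFunc ℚ) / qint m) • (b m * P1 ((n : ℤ) - m)))
    (hQ10 : Q1 0 = 1)
    (hQ1neg : ∀ k : ℤ, k < 0 → Q1 k = 0)
    (hQ1rec : ∀ n : ℕ, 1 ≤ n →
      (n : RatFunc ℚ) • Q1 n =
        ∑ m ∈ Finset.Icc 1 n,
          ((-1 : RatFunc ℚ) ^ (m + 1) * (m : RatFunc ℚ) / qint m) • (a m * Q1 ((n : ℤ) - m)))
    (hcomm : ∀ m m' : ℕ, 1 ≤ m → 1 ≤ m' →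
      a m * b m' - b m' * a m =
        if m = m' then (qint (2 * m) * qint m / (m : RatFunc ℚ)) • (1 : A) else 0)
    (m n : ℕ) :
    Q1 n * P1 m =
      ∑ k ∈ Finset.range (min m n + 1),
        qint ((k : ℤ) + 1) • (P1 ((m : ℤ) - k) * Q1 ((n : ℤ) - k)) := by
  have hP : IsNewtonSeq newtonCoeff b P1 := ⟨hP10, hP1neg, hP1rec⟩
  have hQ : IsNewtonSeq newtonCoeff a Q1 := ⟨hQ10, hQ1neg, hQ1rec⟩
  set κ : ℕ → RatFunc ℚ := fun r => newtonCoeff r * (qint (2 * r) * qint r / r) / r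
  have hPa : ∀ r, 1 ≤ r → ∀ k : ℤ, a r * P1 k - P1 k * a r = κ r • P1 (k - r) :=
    fun r hr => hP.commutator_eq hr fun m' hm' => hcomm r m' hr hm'
  have hf : ∀ j : ℕ, 1 ≤ j → (j : RatFunc ℚ) * qint ((j : ℤ) + 1) =
      ∑ r ∈ Icc 1 j, newtonCoeff r * κ r * qint (((j - r : ℕ) : ℤ) + 1) := by
    intro j _
    rw [← sum_Icc_zpow_add_zpow_neg_mul_qint]
    refine sum_congr rfl fun r hr => ?_
    obtain ⟨hr1, hrj⟩ := mem_Icc.mp hr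
    rw [newtonCoeff_mul_newtonCoeff_mul (by omega : r ≠ 0), Nat.cast_sub hrj]
  rw [hQ.mul_eq_sum hPa (f := fun k => qint ((k : ℤ) + 1)) (by simp [qint_one]) hf m
    (N := n) le_rfl]
  refine (sum_subset (range_subset_range.mpr (by omega)) fun k hk hkm => ?_).symm
  simp only [mem_range] at hk hkm
  rw [hP1neg _ (by omega), zero_mul, smul_zero]

/-- The relations among the `P^{(1^n)}`, `Q^{(1^n)}` are the same as those among the
`P^{(n)}`, `Q^{(n)}`:
`Q^{(1^n)} P^{(1^m)} = ∑_{k=0}^{min(m,n)} [k+1] P^{(1^{m-k})} Q^{(1^{n-k})}`. -/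
theorem heisenberg_Q1P1_same_node
    {A : Type*} [Ring A] [Algebra (RatFunc ℚ) A]
    (b a : ℕ → A)
    (hb : ∀ m m' : ℕ, Commute (b m) (b m'))
    (ha : ∀ m m' : ℕ, Commute (a m) (a m'))
    (P1 Q1 : ℤ → A)
    (hP10 : P1 0 = 1)
    (hP1neg : ∀ k : ℤ, k < 0 → P1 k = 0)
    (hP1rec : ∀ n : ℕ, 1 ≤ n →
      (n : RatFunc ℚ) • P1 n =
        ∑ m ∈ Finset.Icc 1 n,
          ((-1 : RatFunc ℚ) ^ (m + 1) * (m : RatFunc ℚ) / qint m) • (b m * P1 ((n : ℤ) - m)))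
    (hQ10 : Q1 0 = 1)
    (hQ1neg : ∀ k : ℤ, k < 0 → Q1 k = 0)
    (hQ1rec : ∀ n : ℕ, 1 ≤ n →
      (n : RatFunc ℚ) • Q1 n =
        ∑ m ∈ Finset.Icc 1 n,
          ((-1 : RatFunc ℚ) ^ (m + 1) * (m : RatFunc ℚ) / qint m) • (a m * Q1 ((n : ℤ) - m)))
    (hcomm : ∀ m m' : ℕ, 1 ≤ m → 1 ≤ m' →
      a m * b m' - b m' * a m =
        if m = m' then (qint (2 * m) * qint m / (m : RatFunc ℚ)) • (1 : A) else 0)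
    (m n : ℕ) :
    Q1 n * P1 m =
      ∑ k ∈ Finset.range (min m n + 1),
        qint ((k : ℤ) + 1) • (P1 ((m : ℤ) - k) * Q1 ((n : ℤ) - k)) :=
  heisenberg_Q1P1_same_node_general b a P1 Q1 hP10 hP1neg hP1rec hQ10 hQ1neg hQ1rec hcomm m n
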